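/- arXiv:1508.00772 — 3 statements merged into one kernel-verified Lean document; each statement's English description precedes it below -/
import Mathlib

section
/- Let g be any function of partitions (with values in a commutative ring, e.g. ℚ) and let μ be a fixed partition. Then for every nonnegative integer n, Σ_{|λ/μ|=n} f_{λ/μ} · g(λ) = Σ_{k=0}^{n} C(n,k) · D^k g(μ), where the left-hand sum ranges over all partitions λ containing μ with |λ| − |μ| = n. -/
open scoped Classical

namespace HookDiff

/-- The hook length of the box `c` in the Young diagram `μ`: the number of boxes
directly to its right, directly below/above it in its column, plus the box itself. -/
def hook (μ : YoungDiagram) (c : ℕ × ℕ) : ℕ :=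
  (μ.cells.filter (fun d => (d.1 = c.1 ∧ c.2 ≤ d.2) ∨ (d.2 = c.2 ∧ c.1 ≤ d.1))).card

/-- `H μ` is the product of all hook lengths of `μ`. -/
def H (μ : YoungDiagram) : ℚ := ∏ c ∈ μ.cells, (hook μ c : ℚ)

/-- The cells that can be added to `μ` to produce a Young diagram (inner corners). -/
noncomputable def addables (μ : YoungDiagram) : Finset (ℕ × ℕ) :=
  (Finset.range (μ.card + 1) ×ˢ Finset.range (μ.card + 1)).filter
    (fun c => c ∉ μ ∧ IsLowerSet (↑(insert c μ.cells) : Set (ℕ × ℕ)))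

/-- Add a box at cell `c` to `μ` (junk value `μ` if the result is not a diagram). -/
noncomputable def addBox (μ : YoungDiagram) (c : ℕ × ℕ) : YoungDiagram :=
  if h : IsLowerSet (↑(insert c μ.cells) : Set (ℕ × ℕ)) then ⟨insert c μ.cells, h⟩ else μ

/-- The cells that can be removed from `μ` leaving a Young diagram (outer corners). -/
noncomputable def removables (μ : YoungDiagram) : Finset (ℕ × ℕ) :=
  μ.cells.filter (fun c => IsLowerSet (↑(μ.cells.erase c) : Set (ℕ × ℕ)))

/-- Remove the box at cell `c` from `μ` (junk value `μ` if the result is not a diagram). -/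
noncomputable def removeBox (μ : YoungDiagram) (c : ℕ × ℕ) : YoungDiagram :=
  if h : IsLowerSet (↑(μ.cells.erase c) : Set (ℕ × ℕ)) then ⟨μ.cells.erase c, h⟩ else μ

/-- The difference operator `D`: `Dg(λ) = Σ_{λ⁺} g(λ⁺) − g(λ)`, where `λ⁺` runs over
all partitions obtained from `λ` by adding one box. -/
noncomputable def D (g : YoungDiagram → ℚ) : YoungDiagram → ℚ :=
  fun μ => (∑ c ∈ addables μ, g (addBox μ c)) - g μ

/-- The difference operator `D⁻`: `D⁻g(λ) = |λ|·g(λ) − Σ_{λ⁻} g(λ⁻)`, where `λ⁻` runs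
over all partitions obtained from `λ` by removing one box. -/
noncomputable def Dminus (g : YoungDiagram → ℚ) : YoungDiagram → ℚ :=
  fun μ => (μ.card : ℚ) * g μ - ∑ c ∈ removables μ, g (removeBox μ c)

/-- `fskew n μ λ` is the number of standard Young tableaux of skew shape `λ/μ`
(with `n = |λ| - |μ|`), i.e. the number of chains `μ = ν₀ ⊂ ν₁ ⊂ ⋯ ⊂ ν_n = λ`
in which each diagram is obtained from the previous one by adding a single box. -/
noncomputable def fskew : ℕ → YoungDiagram → YoungDiagram → ℕ
  | 0, μ, l => if μ = l then 1 else 0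
  | n + 1, μ, l => ∑ c ∈ addables μ, fskew n (addBox μ c) l

/-- `f_λ`, the number of standard Young tableaux of shape `λ`. -/
noncomputable def f (l : YoungDiagram) : ℕ := fskew l.card ⊥ l

/-- `S(λ, r) = Σ_{□∈λ} ∏_{j=1}^{r} (h_□² − j²)`. -/
def S (l : YoungDiagram) (r : ℕ) : ℚ :=
  ∑ c ∈ l.cells, ∏ j ∈ Finset.Icc 1 r, ((hook l c : ℚ) ^ 2 - (j : ℚ) ^ 2)

/-- `K_r = (2r)!·(2r+1)! / (r!·(r+1)!²)`. -/
def K (r : ℕ) : ℚ :=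
  ((2 * r).factorial : ℚ) * ((2 * r + 1).factorial : ℚ) /
    ((r.factorial : ℚ) * ((r + 1).factorial : ℚ) ^ 2)

/-- The content of the box `c = (i, j)` is `j - i`. -/
def content (c : ℕ × ℕ) : ℚ := (c.2 : ℚ) - (c.1 : ℚ)

/-- `C(λ, r) = Σ_{□∈λ} ∏_{j=0}^{r-1} (c_□² − j²)`. -/
def Ccont (l : YoungDiagram) (r : ℕ) : ℚ :=
  ∑ c ∈ l.cells, ∏ j ∈ Finset.range r, (content c ^ 2 - (j : ℚ) ^ 2)


/-!
Since `fskew` counts chains that add one box at a time, weighting `g` by `fskew n μ` and summing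
is the `n`-th power of the operator `g ↦ (μ ↦ Σ_{μ⁺} g(μ⁺))` applied to `g` at `μ`. That operator
is `D + 1`, and `1` commutes with `D`, so the binomial theorem expands its `n`-th power as
`Σ_k C(n,k) D^k`.
-/

lemma addBox_cells {μ : YoungDiagram} {c : ℕ × ℕ} (hc : c ∈ addables μ) :
    (addBox μ c).cells = insert c μ.cells := by
  rw [addables, Finset.mem_filter] at hc
  rw [addBox, dif_pos hc.2.2]

lemma le_addBox {μ : YoungDiagram} {c : ℕ × ℕ} (hc : c ∈ addables μ) : μ ≤ addBox μ c := by
  intro x hx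
  rw [← YoungDiagram.mem_cells, addBox_cells hc]
  exact Finset.mem_insert_of_mem hx

lemma card_addBox {μ : YoungDiagram} {c : ℕ × ℕ} (hc : c ∈ addables μ) :
    (addBox μ c).card = μ.card + 1 := by
  have hcμ : c ∉ μ.cells := by
    rw [addables, Finset.mem_filter] at hc
    simpa using hc.2.1
  rw [YoungDiagram.card, addBox_cells hc, Finset.card_insert_of_notMem hcμ, YoungDiagram.card]

lemma le_and_card_eq_of_fskew_ne_zero :
    ∀ {n : ℕ} {μ l : YoungDiagram}, fskew n μ l ≠ 0 → μ ≤ l ∧ l.card = μ.card + n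
  | 0, μ, l, h => by
    rw [fskew, ite_ne_right_iff] at h
    exact ⟨h.1.le, by rw [h.1, add_zero]⟩
  | n + 1, μ, l, h => by
    rw [fskew] at h
    obtain ⟨c, hc, hne⟩ := Finset.exists_ne_zero_of_sum_ne_zero h
    obtain ⟨hle, hcard⟩ := le_and_card_eq_of_fskew_ne_zero hne
    exact ⟨(le_addBox hc).trans hle, by rw [hcard, card_addBox hc]; ring⟩

lemma hasFiniteSupport_fskew : ∀ (n : ℕ) (μ : YoungDiagram), (fskew n μ).HasFiniteSupport
  | 0, μ => (Set.finite_singleton μ).subset fun l h => by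
      simp only [Function.mem_support, fskew, ite_ne_right_iff] at h
      exact h.1.symm
  | n + 1, μ => by
      have hsum : fskew (n + 1) μ = fun l => ∑ c ∈ addables μ, fskew n (addBox μ c) l := by
        funext l
        rw [fskew]
      rw [hsum]
      exact Function.HasFiniteSupport.sum (fun c => hasFiniteSupport_fskew n _) _

noncomputable def Dₗ : Module.End ℚ (YoungDiagram → ℚ) where
  toFun := D
  map_add' g h := by
    funext μ
    simp only [D, Pi.add_apply, Finset.sum_add_distrib]
    ring
  map_smul' a g := by
    funext μ
    simp only [D, Pi.smul_apply, smul_eq_mul, RingHom.id_apply, ← Finset.mul_sum]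
    ring

lemma Dₗ_pow_apply (k : ℕ) (g : YoungDiagram → ℚ) : (Dₗ ^ k) g = D^[k] g := by
  rw [Module.End.pow_apply]
  rfl

lemma Dₗ_add_one_apply (g : YoungDiagram → ℚ) (μ : YoungDiagram) :
    ((Dₗ + 1) g) μ = ∑ c ∈ addables μ, g (addBox μ c) :=
  sub_add_cancel _ _

lemma Dₗ_add_one_pow_apply (n : ℕ) (g : YoungDiagram → ℚ) (μ : YoungDiagram) :
    ((Dₗ + 1) ^ n) g μ = ∑ k ∈ Finset.range (n + 1), (n.choose k : ℚ) * D^[k] g μ := by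
  rw [(Commute.one_right Dₗ).add_pow, LinearMap.sum_apply, Finset.sum_apply]
  refine Finset.sum_congr rfl fun k _ => ?_
  rw [one_pow, mul_one, Module.End.mul_apply, Module.End.natCast_apply, map_nsmul,
    Pi.smul_apply, Dₗ_pow_apply, nsmul_eq_mul]

lemma finsum_fskew_mul_eq (n : ℕ) (g : YoungDiagram → ℚ) (μ : YoungDiagram) :
    ∑ᶠ l, (fskew n μ l : ℚ) * g l = ((Dₗ + 1) ^ n) g μ := by
  induction n generalizing μ with
  | zero =>
    rw [pow_zero, Module.End.one_apply, finsum_eq_single _ μ fun l hl => by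
      simp [fskew, Ne.symm hl]]
    simp [fskew]
  | succ n ih =>
    have hfin : ∀ c ∈ addables μ,
        (fun l => (fskew n (addBox μ c) l : ℚ) * g l).HasFiniteSupport := fun c _ =>
      ((hasFiniteSupport_fskew n _).fun_comp Nat.cast_zero).fun_mul_left g
    simp only [fskew, Nat.cast_sum, Finset.sum_mul]
    rw [finsum_sum_comm _ _ hfin, pow_succ', Module.End.mul_apply, Dₗ_add_one_apply]
    simp only [ih]

/-- For any function `g` of partitions and fixed partition `μ`,
`Σ_{|λ/μ|=n} f_{λ/μ} g(λ) = Σ_{k=0}^{n} C(n,k) D^k g(μ)`. -/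
theorem sum_skew_eq_sum_D (g : YoungDiagram → ℚ) (μ : YoungDiagram) (n : ℕ) :
    (∑ᶠ l ∈ {l : YoungDiagram | μ ≤ l ∧ l.card = μ.card + n}, (fskew n μ l : ℚ) * g l)
      = ∑ k ∈ Finset.range (n + 1), (n.choose k : ℚ) * D^[k] g μ := by
  have hsupp : ∀ l ∈ Function.support fun l => (fskew n μ l : ℚ) * g l,
      l ∈ {l : YoungDiagram | μ ≤ l ∧ l.card = μ.card + n} ↔ l ∈ Set.univ := fun l hl =>
    iff_of_true (le_and_card_eq_of_fskew_ne_zero (by simpa using left_ne_zero_of_mul hl))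
      trivial
  rw [finsum_mem_inter_support_eq' _ _ _ hsupp, finsum_mem_univ, finsum_fskew_mul_eq,
    Dₗ_add_one_pow_apply]

end HookDiff
end

section
/- Let g be a rational-valued function of partitions. Then D⁻g(λ) = 0 for every partition λ if and only if there is a constant a ∈ ℚ such that g(λ) = a/H_λ for every partition λ. -/
/-!
Let `β i = λ i + (n - 1 - i)` be the β-numbers of `λ` padded to `n` rows. In row `i` the hook
lengths together with the differences `β i - β k` (`i < k < n`) are exactly `1, …, β i`, whence
Frobenius' formula `H λ = ∏ i, β i! / ∏ i < k, (β i - β k)`. Removing the corner of row `r` lowers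
`β r` by one, so `H λ / H λ⁻ = β r * ∏ k ≠ r, (β r - β k - 1) / (β r - β k)`; this expression
vanishes for a row without corner, where `β (r + 1) = β r - 1`. Summed over all rows, Lagrange
interpolation of `X * ∏ k, (X - β k - 1)` at the nodes `β k` evaluates it to
`∑ β - n.choose 2 = |λ|`, i.e. `D⁻ (1 / H) = 0`. Conversely `D⁻ g λ = 0` determines `g λ` from
the values of `g` on smaller diagrams, so by induction on `|λ|` every solution is `g ∅ / H`.
-/

open scoped Classical

open Finset

namespace Lagrange

open Polynomial

section CommRing

variable {R ι : Type*} [CommRing R] (s : Finset ι) (v : ι → R)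

theorem coeff_nodal_card_sub_one (hs : 0 < #s) : (nodal s v).coeff (#s - 1) = -∑ i ∈ s, v i := by
  rw [nodal_eq, prod_X_sub_C_coeff_card_pred s v hs]

theorem coeff_nodal_of_card_le [Nontrivial R] {a : ℕ} (ha : #s ≤ a) :
    (nodal s v).coeff a = if a = #s then 1 else 0 := by
  split_ifs with h
  · rw [h, ← natDegree_nodal (v := v), nodal_monic.coeff_natDegree]
  · exact coeff_eq_zero_of_natDegree_lt (by rw [natDegree_nodal]; omega)

theorem coeff_nodal_add_const {k : ℕ} (hk : #s = k + 2) (c : R) :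
    (nodal s (v · + c)).coeff k
      = (nodal s v).coeff k + (k + 1) * c * ∑ i ∈ s, v i + (k + 2).choose 2 * c ^ 2 := by
  induction s using Finset.cons_induction generalizing k with
  | empty => simp at hk
  | cons a t ha ih =>
    have ht : #t = k + 1 := by rw [card_cons] at hk; omega
    have hsub (w : ι → R) : (nodal t w).coeff k = -∑ i ∈ t, w i := by
      simpa [ht] using coeff_nodal_card_sub_one t w (by omega)
    rw [cons_eq_insert, nodal_insert_eq_nodal ha, nodal_insert_eq_nodal ha, sum_insert ha]
    rcases k with _ | m
    · simp only [mul_coeff_zero, coeff_sub, coeff_X_zero, coeff_C_zero, hsub]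
      simp only [sum_add_distrib, sum_const, ht, Nat.choose_self]
      push_cast; ring
    · rw [coeff_X_sub_C_mul, coeff_X_sub_C_mul, ih (by omega), hsub, hsub, sum_add_distrib,
        sum_const, ht, Nat.choose_succ_succ' (m + 2), Nat.choose_one_right]
      push_cast; ring

end CommRing

theorem sum_mul_prod_sub_sub_one_div {F ι : Type*} [Field F] [DecidableEq ι] (s : Finset ι)
    {v : ι → F} (hv : Set.InjOn v s) :
    ∑ i ∈ s, v i * ∏ j ∈ s.erase i, (v i - v j - 1) / (v i - v j)
      = ∑ i ∈ s, v i - (#s).choose 2 := by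
  obtain rfl | ⟨k, hk⟩ : s = ∅ ∨ ∃ k, #s = k + 1 :=
    (eq_empty_or_nonempty s).imp_right fun hs => ⟨#s - 1, by have := hs.card_pos; omega⟩
  · simp
  -- `R` has degree `< #s` and agrees with `X * nodal s (v · + 1)` on the nodes.
  set R := X * nodal s (v · + 1) - (X - C (#s : F)) * nodal s v with hR
  have hR_coeff_succ (a : ℕ) : R.coeff (a + 1)
      = (nodal s (v · + 1)).coeff a - (nodal s v).coeff a + #s * (nodal s v).coeff (a + 1) := by
    rw [hR, coeff_sub, coeff_X_mul, coeff_X_sub_C_mul]; ring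
  have hR_degree : R.degree < #s := by
    refine degree_lt_iff_coeff_zero _ _ |>.mpr fun m hm => ?_
    obtain ⟨a, rfl⟩ : ∃ a, m = a + 1 := ⟨m - 1, by omega⟩
    rw [hR_coeff_succ]
    obtain ha | ha : a = #s - 1 ∨ #s ≤ a := by omega
    · rw [ha, coeff_nodal_card_sub_one _ _ (by omega), coeff_nodal_card_sub_one _ _ (by omega),
        Nat.sub_add_cancel (by omega), coeff_nodal_of_card_le s v le_rfl, if_pos rfl,
        sum_add_distrib, sum_const]
      simp
    · rw [coeff_nodal_of_card_le s _ ha, coeff_nodal_of_card_le s _ ha,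
        coeff_nodal_of_card_le s _ (by omega), if_neg (show a + 1 ≠ #s by omega)]
      ring
  have hR_coeff : R.coeff (#s - 1) = (#s).choose 2 - ∑ i ∈ s, v i := by
    rcases k with _ | m
    · have h0 : (nodal s v).coeff 0 = -∑ i ∈ s, v i := by
        simpa [hk] using coeff_nodal_card_sub_one s v (by omega)
      rw [hk, hR, coeff_sub, mul_coeff_zero, mul_coeff_zero, h0]
      simp [hk]
    · have hm : (nodal s v).coeff (m + 1) = -∑ i ∈ s, v i := by
        simpa [hk] using coeff_nodal_card_sub_one s v (by omega)
      rw [hk, Nat.add_sub_cancel, hR_coeff_succ, coeff_nodal_add_const s v hk, hm, hk]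
      push_cast; ring
  have hR_eval (i : ι) (hi : i ∈ s) : R.eval (v i) / ∏ j ∈ s.erase i, (v i - v j)
      = -(v i * ∏ j ∈ s.erase i, (v i - v j - 1) / (v i - v j)) := by
    rw [hR, eval_sub, eval_mul, eval_mul, eval_nodal_at_node hi, eval_nodal, eval_X,
      ← mul_prod_erase s _ hi, prod_div_distrib]
    simp only [sub_add_eq_sub_sub, mul_zero, sub_zero]
    ring
  rw [coeff_eq_sum hv hR_degree, sum_congr rfl hR_eval, sum_neg_distrib] at hR_coeff
  linear_combination -hR_coeff

end Lagrange

theorem prod_range_prod_Ioo_sub_div_sub_of_eq_sub_one {F : Type*} [Field F] {β β' : ℕ → F}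
    {n r : ℕ} (hr : r < n) (hβ : Set.InjOn β (range n)) (hβ'_ne : ∀ k ≠ r, β' k = β k)
    (hβ'_r : β' r = β r - 1) :
    ∏ i ∈ range n, ∏ k ∈ Ioo i n, (β' i - β' k) / (β i - β k)
      = ∏ k ∈ (range n).erase r, (β r - β k - 1) / (β r - β k) := by
  have hone {i k : ℕ} (hi : i ≠ r) (hk : k ≠ r) (hin : i < n) (hkn : k < n) (hik : i < k) :
      (β' i - β' k) / (β i - β k) = 1 := by
    rw [hβ'_ne i hi, hβ'_ne k hk]
    exact div_self (sub_ne_zero.mpr (hβ.ne (by simpa) (by simpa) hik.ne))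
  have hbelow (i : ℕ) (hi : i ∈ range r) :
      ∏ k ∈ Ioo i n, (β' i - β' k) / (β i - β k) = (β r - β i - 1) / (β r - β i) := by
    have hi := mem_range.mp hi
    rw [prod_eq_single_of_mem r (mem_Ioo.mpr ⟨hi, hr⟩) fun k hk hkr =>
      hone hi.ne hkr (by omega) (mem_Ioo.mp hk).2 (mem_Ioo.mp hk).1, hβ'_ne i hi.ne, hβ'_r,
      ← neg_div_neg_eq]
    congr 1 <;> ring
  have hat : ∏ k ∈ Ioo r n, (β' r - β' k) / (β r - β k)
      = ∏ k ∈ Ioo r n, (β r - β k - 1) / (β r - β k) :=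
    prod_congr rfl fun k hk => by rw [hβ'_r, hβ'_ne k (mem_Ioo.mp hk).1.ne']; ring
  have habove (i : ℕ) (hi : i ∈ Ioo r n) :
      ∏ k ∈ Ioo i n, (β' i - β' k) / (β i - β k) = 1 :=
    prod_eq_one fun k hk => hone (mem_Ioo.mp hi).1.ne' (by grind) (mem_Ioo.mp hi).2
      (mem_Ioo.mp hk).2 (mem_Ioo.mp hk).1
  have hsplit : range n = range r ∪ insert r (Ioo r n) := by
    ext
    simp only [mem_range, union_insert, mem_insert, mem_union, mem_Ioo]
    omega
  have herase : (range n).erase r = range r ∪ Ioo r n := by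
    ext
    simp only [mem_erase, ne_eq, mem_range, mem_union, mem_Ioo]
    omega
  have hdisj : Disjoint (range r) (Ioo r n) := disjoint_left.mpr fun k hk hk' => by
    simp only [mem_range, mem_Ioo] at hk hk'
    omega
  rw [herase, hsplit, prod_union (disjoint_insert_right.mpr ⟨by simp, hdisj⟩),
    prod_insert (by simp), prod_congr rfl hbelow, hat, prod_congr rfl habove, prod_const_one,
    mul_one, prod_union hdisj]

namespace YoungDiagram

variable (μ : YoungDiagram) {n : ℕ}

theorem rowLen_colLen_zero : μ.rowLen (μ.colLen 0) = 0 := by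
  by_contra h
  exact (mem_iff_lt_colLen.mp (mem_iff_lt_rowLen.mpr (Nat.pos_of_ne_zero h))).false

theorem colLen_le_of_rowLen_eq_zero (hn : μ.rowLen n = 0) (j : ℕ) : μ.colLen j ≤ n :=
  not_lt.mp fun h => by
    have := mem_iff_lt_rowLen.mp (mem_iff_lt_colLen.mpr h)
    omega

theorem mem_cells_iff_of_rowLen_eq_zero (hn : μ.rowLen n = 0) (c : ℕ × ℕ) :
    c ∈ μ.cells ↔ c.1 ∈ range n ∧ c.2 ∈ range (μ.rowLen c.1) := by
  rw [mem_cells, mem_range, mem_range, ← mem_iff_lt_rowLen]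
  exact ⟨fun hc => ⟨(mem_iff_lt_colLen.mp hc).trans_le (μ.colLen_le_of_rowLen_eq_zero hn _), hc⟩,
    And.right⟩

theorem prod_cells_eq_prod_range_rowLen {M : Type*} [CommMonoid M] (hn : μ.rowLen n = 0)
    (f : ℕ × ℕ → M) :
    ∏ c ∈ μ.cells, f c = ∏ i ∈ range n, ∏ j ∈ range (μ.rowLen i), f (i, j) :=
  prod_finset_product _ _ _ (μ.mem_cells_iff_of_rowLen_eq_zero hn)

theorem card_eq_sum_rowLen (hn : μ.rowLen n = 0) : μ.card = ∑ i ∈ range n, μ.rowLen i := by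
  rw [YoungDiagram.card, card_eq_sum_ones, sum_finset_product _ (range n)
    (fun i => range (μ.rowLen i)) (μ.mem_cells_iff_of_rowLen_eq_zero hn)]
  simp

end YoungDiagram

namespace HookDiff

open YoungDiagram

theorem hook_eq {μ : YoungDiagram} {i j : ℕ} (h : (i, j) ∈ μ) :
    hook μ (i, j) = (μ.rowLen i - j) + (μ.colLen j - i - 1) := by
  have hsplit : μ.cells.filter (fun d => (d.1 = i ∧ j ≤ d.2) ∨ (d.2 = j ∧ i ≤ d.1))
      = (Ico j (μ.rowLen i)).image (i, ·) ∪ (Ioo i (μ.colLen j)).image (·, j) := by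
    ext ⟨a, b⟩
    simp only [mem_filter, mem_cells, mem_union, mem_image, mem_Ico, mem_Ioo, Prod.mk.injEq]
    constructor
    · rintro ⟨hab, ⟨rfl, hb⟩ | ⟨rfl, ha⟩⟩
      · exact Or.inl ⟨b, ⟨hb, mem_iff_lt_rowLen.mp hab⟩, rfl, rfl⟩
      · rcases ha.eq_or_lt with rfl | ha
        · exact Or.inl ⟨b, ⟨le_rfl, mem_iff_lt_rowLen.mp hab⟩, rfl, rfl⟩
        · exact Or.inr ⟨a, ⟨ha, mem_iff_lt_colLen.mp hab⟩, rfl, rfl⟩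
    · rintro (⟨t, ⟨hjt, ht⟩, rfl, rfl⟩ | ⟨t, ⟨hit, ht⟩, rfl, rfl⟩)
      · exact ⟨mem_iff_lt_rowLen.mpr ht, Or.inl ⟨rfl, hjt⟩⟩
      · exact ⟨mem_iff_lt_colLen.mpr ht, Or.inr ⟨rfl, hit.le⟩⟩
  have hdisj :
      Disjoint ((Ico j (μ.rowLen i)).image (i, ·)) ((Ioo i (μ.colLen j)).image (·, j)) := by
    simp only [disjoint_left, mem_image, mem_Ioo, not_exists, not_and]
    rintro _ ⟨t, -, rfl⟩ a ⟨hia, -⟩ h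
    exact hia.ne (congrArg Prod.fst h).symm
  rw [hook, hsplit, card_union_of_disjoint hdisj,
    card_image_of_injective _ (Prod.mk_right_injective i),
    card_image_of_injective _ (Prod.mk_left_injective j), Nat.card_Ico, Nat.card_Ioo]

/-- The β-numbers of `μ` padded to `n` rows: when `μ` has exactly `n` rows, `beta μ n i` is the
hook length of the cell `(i, 0)`. -/
def beta (μ : YoungDiagram) (n i : ℕ) : ℕ := μ.rowLen i + (n - 1 - i)

theorem beta_lt_beta (μ : YoungDiagram) {n i k : ℕ} (hik : i < k) (hk : k < n) :
    beta μ n k < beta μ n i := by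
  have := μ.rowLen_anti i k hik.le
  unfold beta
  omega

theorem injOn_beta (μ : YoungDiagram) (n : ℕ) : Set.InjOn (beta μ n) (range n) :=
  StrictAntiOn.injOn fun _ _ _ hk hik => beta_lt_beta μ hik (by simpa using hk)

theorem injOn_hook (μ : YoungDiagram) (i : ℕ) :
    Set.InjOn (fun j => hook μ (i, j)) (range (μ.rowLen i)) := by
  refine StrictAntiOn.injOn fun j _ j' hj' hjj' => ?_
  replace hj' : j' < μ.rowLen i := by simpa using hj'
  have := μ.colLen_anti j j' hjj'.le
  have := mem_iff_lt_colLen.mp (mem_iff_lt_rowLen.mpr hj')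
  simp only [hook_eq (mem_iff_lt_rowLen.mpr hj'), hook_eq (mem_iff_lt_rowLen.mpr (hjj'.trans hj'))]
  omega

theorem injOn_beta_sub (μ : YoungDiagram) (n i : ℕ) :
    Set.InjOn (beta μ n i - beta μ n ·) (Ioo i n) := by
  refine StrictMonoOn.injOn fun k hk k' hk' hkk' => ?_
  simp only [coe_Ioo, Set.mem_Ioo] at hk hk'
  have := beta_lt_beta μ hkk' hk'.2
  have := beta_lt_beta μ hk.1 hk.2
  omega

theorem disjoint_image_hook_image_beta_sub (μ : YoungDiagram) {n i : ℕ} (hn : μ.rowLen n = 0) :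
    Disjoint ((range (μ.rowLen i)).image fun j => hook μ (i, j))
      ((Ioo i n).image (beta μ n i - beta μ n ·)) := by
  simp only [disjoint_left, mem_image, mem_range, mem_Ioo, not_exists, not_and]
  rintro _ ⟨j, hj, rfl⟩ k hk h
  have := mem_iff_lt_colLen.mp (mem_iff_lt_rowLen.mpr hj)
  have := μ.colLen_le_of_rowLen_eq_zero hn j
  have := μ.rowLen_anti i k hk.1.le
  have : k < μ.colLen j ↔ j < μ.rowLen k := mem_iff_lt_colLen.symm.trans mem_iff_lt_rowLen
  rw [hook_eq (mem_iff_lt_rowLen.mpr hj), beta, beta] at h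
  omega

theorem image_hook_union_image_beta_sub (μ : YoungDiagram) {n i : ℕ} (hn : μ.rowLen n = 0) :
    (range (μ.rowLen i)).image (fun j => hook μ (i, j))
      ∪ (Ioo i n).image (beta μ n i - beta μ n ·) = Icc 1 (beta μ n i) := by
  refine eq_of_subset_of_card_le (union_subset ?_ ?_) ?_
  · simp only [subset_iff, mem_image, mem_range, mem_Icc]
    rintro _ ⟨j, hj, rfl⟩
    have := mem_iff_lt_colLen.mp (mem_iff_lt_rowLen.mpr hj)
    have := μ.colLen_le_of_rowLen_eq_zero hn j
    rw [hook_eq (mem_iff_lt_rowLen.mpr hj), beta]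
    omega
  · simp only [subset_iff, mem_image, mem_Ioo, mem_Icc]
    rintro _ ⟨k, hk, rfl⟩
    have := μ.rowLen_anti i k hk.1.le
    unfold beta
    omega
  · rw [card_union_of_disjoint (disjoint_image_hook_image_beta_sub μ hn),
      card_image_of_injOn (injOn_hook μ i), card_image_of_injOn (injOn_beta_sub μ n i),
      card_range, Nat.card_Ioo, Nat.card_Icc, beta]
    omega

theorem factorial_beta (μ : YoungDiagram) {n i : ℕ} (hn : μ.rowLen n = 0) :
    (beta μ n i).factorial = (∏ j ∈ range (μ.rowLen i), hook μ (i, j))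
      * ∏ k ∈ Ioo i n, (beta μ n i - beta μ n k) := by
  rw [← prod_Ico_id_eq_factorial, Ico_add_one_right_eq_Icc,
    ← image_hook_union_image_beta_sub μ hn, prod_union (disjoint_image_hook_image_beta_sub μ hn),
    prod_image (injOn_hook μ i), prod_image (injOn_beta_sub μ n i)]

theorem hook_pos {μ : YoungDiagram} {c : ℕ × ℕ} (hc : c ∈ μ) : 0 < hook μ c :=
  card_pos.mpr ⟨c, mem_filter.mpr ⟨(mem_cells c).mpr hc, Or.inl ⟨rfl, le_rfl⟩⟩⟩

theorem H_ne_zero (μ : YoungDiagram) : H μ ≠ 0 :=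
  prod_ne_zero_iff.mpr fun c hc => Nat.cast_ne_zero.mpr (hook_pos ((mem_cells c).mp hc)).ne'

theorem H_bot : H ⊥ = 1 := by
  rw [H, cells_bot, prod_empty]

theorem H_eq_prod_div (μ : YoungDiagram) {n : ℕ} (hn : μ.rowLen n = 0) :
    H μ = ∏ i ∈ range n,
      ((beta μ n i).factorial : ℚ) / ∏ k ∈ Ioo i n, ((beta μ n i : ℚ) - beta μ n k) := by
  rw [H, μ.prod_cells_eq_prod_range_rowLen hn]
  refine prod_congr rfl fun i hi => ?_
  have hlt (k : ℕ) (hk : k ∈ Ioo i n) : beta μ n k < beta μ n i :=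
    beta_lt_beta μ (mem_Ioo.mp hk).1 (mem_Ioo.mp hk).2
  have hcast (k : ℕ) (hk : k ∈ Ioo i n) :
      ((beta μ n i - beta μ n k : ℕ) : ℚ) = (beta μ n i : ℚ) - beta μ n k :=
    Nat.cast_sub (hlt k hk).le
  rw [factorial_beta μ hn, Nat.cast_mul, Nat.cast_prod, Nat.cast_prod,
    prod_congr rfl hcast, mul_div_cancel_right₀]
  exact prod_ne_zero_iff.mpr fun k hk => sub_ne_zero.mpr (Nat.cast_injective.ne (hlt k hk).ne')

theorem mem_removables_iff {μ : YoungDiagram} {i j : ℕ} :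
    (i, j) ∈ removables μ ↔ j + 1 = μ.rowLen i ∧ μ.rowLen (i + 1) ≤ j := by
  rw [removables, mem_filter, mem_cells, coe_erase, mem_iff_lt_rowLen]
  constructor
  · rintro ⟨hj, hlower⟩
    have hout (d : ℕ × ℕ) (hd : (i, j) ≤ d) (hne : d ≠ (i, j)) : d ∉ μ :=
      fun hdμ => (hlower hd ⟨hdμ, hne⟩).2 rfl
    have h₁ := hout (i, j + 1) (by simp) (by simp)
    have h₂ := hout (i + 1, j) (by simp) (by simp)
    rw [mem_iff_lt_rowLen] at h₁ h₂
    omega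
  · rintro ⟨h₁, h₂⟩
    refine ⟨by omega, μ.isLowerSet.erase fun ⟨a, b⟩ hab hle => ?_⟩
    rw [mem_coe, mem_cells, mem_iff_lt_rowLen] at hab
    obtain ⟨hia, hjb⟩ := Prod.mk_le_mk.mp hle
    obtain rfl : a = i := by
      by_contra hne
      have := μ.rowLen_anti (i + 1) a (by omega)
      omega
    rw [show b = j by omega]

theorem removeBox_cells {μ : YoungDiagram} {c : ℕ × ℕ} (hc : c ∈ removables μ) :
    (removeBox μ c).cells = μ.cells.erase c := by
  rw [removeBox, dif_pos (mem_filter.mp hc).2]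

theorem card_removeBox {μ : YoungDiagram} {c : ℕ × ℕ} (hc : c ∈ removables μ) :
    (removeBox μ c).card + 1 = μ.card := by
  rw [YoungDiagram.card, removeBox_cells hc, card_erase_add_one (mem_filter.mp hc).1]

theorem rowLen_removeBox {μ : YoungDiagram} {i j : ℕ} (hc : (i, j) ∈ removables μ) (k : ℕ) :
    (removeBox μ (i, j)).rowLen k = if k = i then j else μ.rowLen k := by
  have hj := (mem_removables_iff.mp hc).1
  refine eq_of_forall_lt_iff fun b => ?_
  rw [← mem_iff_lt_rowLen, ← mem_cells, removeBox_cells hc, mem_erase, mem_cells,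
    mem_iff_lt_rowLen, Ne, Prod.mk.injEq]
  split_ifs with hk
  · subst hk
    omega
  · omega

theorem fst_lt_of_mem_removables {μ : YoungDiagram} {n : ℕ} (hn : μ.rowLen n = 0)
    {c : ℕ × ℕ} (hc : c ∈ removables μ) : c.1 < n := by
  have := (mem_removables_iff.mp hc).1
  by_contra h
  have := μ.rowLen_anti n c.1 (by omega)
  omega

theorem H_div_H_removeBox {μ : YoungDiagram} {n : ℕ} (hn : μ.rowLen n = 0) {c : ℕ × ℕ}
    (hc : c ∈ removables μ) :
    H μ / H (removeBox μ c) = beta μ n c.1 * ∏ k ∈ (range n).erase c.1,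
      ((beta μ n c.1 : ℚ) - beta μ n k - 1) / ((beta μ n c.1 : ℚ) - beta μ n k) := by
  obtain ⟨r, j⟩ := c
  set μ' := removeBox μ (r, j)
  have hj := (mem_removables_iff.mp hc).1
  have hrowLen := rowLen_removeBox hc
  have hr : r < n := fst_lt_of_mem_removables hn hc
  have hn' : μ'.rowLen n = 0 := by rw [hrowLen, if_neg hr.ne', hn]
  have hβ_ne (k : ℕ) (hk : k ≠ r) : beta μ' n k = beta μ n k := by
    rw [beta, beta, hrowLen, if_neg hk]
  have hβ_r : beta μ n r = beta μ' n r + 1 := by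
    rw [beta, beta, hrowLen, if_pos rfl]
    omega
  have hfactorial : ∏ i ∈ range n, ((beta μ n i).factorial / (beta μ' n i).factorial : ℚ)
      = beta μ n r := by
    rw [prod_eq_single_of_mem r (mem_range.mpr hr) fun k _ hk => by
      rw [hβ_ne k hk, div_self (Nat.cast_ne_zero.mpr (Nat.factorial_ne_zero _))],
      hβ_r, Nat.factorial_succ, Nat.cast_mul, mul_div_cancel_right₀ _
        (Nat.cast_ne_zero.mpr (Nat.factorial_ne_zero _))]
  have hpairs := prod_range_prod_Ioo_sub_div_sub_of_eq_sub_one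
    (β := fun k => (beta μ n k : ℚ)) (β' := fun k => (beta μ' n k : ℚ)) hr
    (Nat.cast_injective.comp_injOn (injOn_beta μ n))
    (fun k hk => congrArg ((↑) : ℕ → ℚ) (hβ_ne k hk)) (by simp only [hβ_r]; push_cast; ring)
  rw [H_eq_prod_div μ hn, H_eq_prod_div μ' hn', ← prod_div_distrib]
  dsimp only
  rw [← hpairs, ← hfactorial, ← prod_mul_distrib]
  refine prod_congr rfl fun i _ => ?_
  rw [prod_div_distrib, div_div_div_eq]
  ring

theorem sum_beta (μ : YoungDiagram) {n : ℕ} (hn : μ.rowLen n = 0) :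
    ∑ i ∈ range n, beta μ n i = μ.card + n.choose 2 := by
  simp only [beta]
  rw [sum_add_distrib, ← μ.card_eq_sum_rowLen hn, sum_range_reflect (fun i => i) n, sum_range_id,
    Nat.choose_two_right]

theorem injOn_fst_removables (μ : YoungDiagram) :
    Set.InjOn Prod.fst (removables μ : Set (ℕ × ℕ)) := by
  rintro ⟨i, j⟩ hc ⟨i', j'⟩ hc' (rfl : i = i')
  have := (mem_removables_iff.mp hc).1
  have := (mem_removables_iff.mp hc').1
  rw [show j = j' by omega]

-- A nonempty row without removable cell is as long as the next one: `β (r + 1) = β r - 1`.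
theorem prod_erase_beta_eq_zero {μ : YoungDiagram} {n r : ℕ} (hn : μ.rowLen n = 0)
    (hrow : 0 < μ.rowLen r) (hr : (r, μ.rowLen r - 1) ∉ removables μ) :
    ∏ k ∈ (range n).erase r,
      ((beta μ n r : ℚ) - beta μ n k - 1) / ((beta μ n r : ℚ) - beta μ n k) = 0 := by
  rw [mem_removables_iff] at hr
  have := μ.rowLen_anti r (r + 1) (by omega)
  have hr1 : r + 1 < n := by
    by_contra hge
    have := μ.rowLen_anti n (r + 1) (by omega)
    omega
  have hβ : beta μ n (r + 1) + 1 = beta μ n r := by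
    unfold beta
    omega
  refine prod_eq_zero (mem_erase.mpr ⟨by omega, mem_range.mpr hr1⟩) ?_
  simp only [← hβ, Nat.cast_add, Nat.cast_one, add_sub_cancel_left, sub_self, zero_div]

theorem sum_H_div_H_removeBox (μ : YoungDiagram) :
    ∑ c ∈ removables μ, H μ / H (removeBox μ c) = μ.card := by
  set n := μ.colLen 0
  have hn : μ.rowLen n = 0 := μ.rowLen_colLen_zero
  set β : ℕ → ℚ := fun k => beta μ n k
  set w : ℕ → ℚ := fun r => β r * ∏ k ∈ (range n).erase r, (β r - β k - 1) / (β r - β k)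
  have hw_zero (r : ℕ) (hr : r ∈ range n) (hnot : r ∉ (removables μ).image Prod.fst) :
      w r = 0 :=
    mul_eq_zero_of_right _ <| prod_erase_beta_eq_zero hn
      (mem_iff_lt_rowLen.mp (mem_iff_lt_colLen.mpr (mem_range.mp hr)))
      fun h => hnot (mem_image_of_mem _ h)
  calc ∑ c ∈ removables μ, H μ / H (removeBox μ c)
      = ∑ c ∈ removables μ, w c.1 := sum_congr rfl fun c hc => H_div_H_removeBox hn hc
    _ = ∑ r ∈ (removables μ).image Prod.fst, w r := (sum_image (injOn_fst_removables μ)).symm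
    _ = ∑ r ∈ range n, w r := sum_subset (fun r hr => by
          obtain ⟨c, hc, rfl⟩ := mem_image.mp hr
          exact mem_range.mpr (fst_lt_of_mem_removables hn hc)) hw_zero
    _ = ∑ r ∈ range n, β r - n.choose 2 := by
          have := Lagrange.sum_mul_prod_sub_sub_one_div (range n) (v := β)
            (Nat.cast_injective.comp_injOn (injOn_beta μ n))
          rwa [card_range] at this
    _ = μ.card := by
          simp only [β]
          rw [← Nat.cast_sum, sum_beta μ hn]
          push_cast
          ring

theorem Dminus_div_H (a : ℚ) (μ : YoungDiagram) : Dminus (fun l => a / H l) μ = 0 := by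
  have hterm (c : ℕ × ℕ) : a / H (removeBox μ c) = a / H μ * (H μ / H (removeBox μ c)) := by
    field_simp [H_ne_zero μ]
  rw [Dminus, sum_congr rfl fun c _ => hterm c, ← mul_sum, sum_H_div_H_removeBox]
  ring

theorem eq_of_Dminus_eq {g g' : YoungDiagram → ℚ} (h : ∀ l, Dminus g l = Dminus g' l)
    (h_bot : g ⊥ = g' ⊥) : g = g' := by
  funext l
  induction hN : l.card using Nat.strong_induction_on generalizing l with
  | _ N ih =>
    rcases N with _ | N
    · obtain rfl : l = ⊥ := le_bot_iff.mp (cells_subset_iff.mp (by simp [card_eq_zero.mp hN]))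
      exact h_bot
    · have hsum : ∑ c ∈ removables l, g (removeBox l c) = ∑ c ∈ removables l, g' (removeBox l c) :=
        sum_congr rfl fun c hc => ih N (by omega) _ (by have := card_removeBox hc; omega)
      have hl := h l
      rw [Dminus, Dminus, hsum, hN, sub_left_inj] at hl
      exact mul_left_cancel₀ (Nat.cast_ne_zero.mpr N.succ_ne_zero) hl

/-- `D⁻g(λ) = 0` for every partition `λ` iff `g(λ) = a/H_λ` for some constant `a`. -/
theorem Dminus_eq_zero_iff (g : YoungDiagram → ℚ) :
    (∀ l : YoungDiagram, Dminus g l = 0) ↔ ∃ a : ℚ, ∀ l : YoungDiagram, g l = a / H l := by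
  constructor
  · intro hg
    refine ⟨g ⊥, congrFun (eq_of_Dminus_eq (fun l => ?_) ?_)⟩
    · rw [hg, Dminus_div_H]
    · rw [H_bot, div_one]
  · rintro ⟨a, ha⟩ l
    rw [funext ha]
    exact Dminus_div_H a l

end HookDiff
end

section
/- Let g be a rational-valued function of partitions, k a nonnegative integer, and r an integer. Then for every partition λ with n = |λ|: D^k( C(n,r) · g(λ) ) = Σ_{i=0}^{k} C(k,i) · C(n+i, r−k+i) · D^i g(λ), where C(·,·) denotes binomial coefficients (zero when the lower index is negative). Here C(n,r)·g(λ) denotes the function of partitions λ ↦ C(|λ|, r)·g(λ). -/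
/-!
Every `λ⁺` has size `|λ| + 1`, so `D` obeys a Leibniz rule against factors depending only on
the size: `D(φ(|λ|)·g) = φ(|λ|+1)·Dg + (φ(|λ|+1) − φ(|λ|))·g`. For `φ(n) = C(n+s, r)` Pascal's
rule turns the second coefficient into `C(n+s, r−1)`. Hence, by induction on `k` with the shift
`s` free, `D^{k+1}(C(n+s,r)·g)` splits into two sums of the claimed shape at rank `k`, and these
recombine by Pascal's rule for `C(k+1, i)`.
-/

open scoped Classical

namespace HookDiff

/-- Binomial coefficient `C(n, r)` with integer lower index, equal to `0` when `r < 0`. -/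
def ichoose (n : ℕ) (r : ℤ) : ℚ :=
  if 0 ≤ r then (n.choose r.toNat : ℚ) else 0

lemma ichoose_natCast (n m : ℕ) : ichoose n m = n.choose m := by simp [ichoose]

lemma ichoose_of_neg (n : ℕ) {r : ℤ} (hr : r < 0) : ichoose n r = 0 := if_neg hr.not_ge

lemma ichoose_succ (n : ℕ) (r : ℤ) :
    ichoose (n + 1) r = ichoose n r + ichoose n (r - 1) := by
  rcases lt_trichotomy r 0 with hr | rfl | hr
  · simp only [ichoose_of_neg _ hr, ichoose_of_neg _ (by omega : r - 1 < 0), add_zero]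
  · simp [ichoose]
  · obtain ⟨m, rfl⟩ : ∃ m : ℕ, r = ((m + 1 : ℕ) : ℤ) := ⟨(r - 1).toNat, by omega⟩
    rw [show ((m + 1 : ℕ) : ℤ) - 1 = m by push_cast; ring, ichoose_natCast, ichoose_natCast,
      ichoose_natCast, Nat.choose_succ_succ', Nat.cast_add, add_comm]

noncomputable def DAddHom : (YoungDiagram → ℚ) →+ (YoungDiagram → ℚ) where
  toFun := D
  map_zero' := by funext μ; simp [D]
  map_add' f h := by funext μ; simp only [D, Pi.add_apply, Finset.sum_add_distrib]; ring

lemma iterate_D_add (k : ℕ) (f h : YoungDiagram → ℚ) :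
    D^[k] (f + h) = D^[k] f + D^[k] h :=
  funext fun _ => congrFun (iterate_map_add DAddHom k f h) _

lemma D_mul_card (φ : ℕ → ℚ) (g : YoungDiagram → ℚ) :
    D (fun t => φ t.card * g t)
      = (fun t => φ (t.card + 1) * D g t) + fun t => (φ (t.card + 1) - φ t.card) * g t := by
  funext t
  have hsum : ∑ c ∈ addables t, φ (addBox t c).card * g (addBox t c)
      = φ (t.card + 1) * ∑ c ∈ addables t, g (addBox t c) := by
    rw [Finset.mul_sum]
    exact Finset.sum_congr rfl fun c hc => by rw [card_addBox hc]
  simp only [D, Pi.add_apply, hsum]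
  ring

lemma D_ichoose_mul (s : ℕ) (r : ℤ) (g : YoungDiagram → ℚ) :
    D (fun t => ichoose (t.card + s) r * g t)
      = (fun t => ichoose (t.card + (s + 1)) r * D g t)
        + fun t => ichoose (t.card + s) (r - 1) * g t := by
  rw [D_mul_card (fun n => ichoose (n + s) r)]
  simp only [add_right_comm _ 1 s, ichoose_succ, add_sub_cancel_left, ← add_assoc]

lemma iterate_D_ichoose_mul (k : ℕ) (s : ℕ) (r : ℤ) (g : YoungDiagram → ℚ) (l : YoungDiagram) :
    D^[k] (fun t => ichoose (t.card + s) r * g t) l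
      = ∑ i ∈ Finset.range (k + 1),
          (k.choose i : ℚ) * ichoose (l.card + s + i) (r - k + i) * D^[i] g l := by
  induction k generalizing s r g with
  | zero => simp
  | succ k ih =>
    have pascal := Finset.sum_choose_succ_mul
      (fun i _ => ichoose (l.card + s + i) (r - (k + 1 : ℕ) + i) * D^[i] g l) k
    simp only [← mul_assoc] at pascal
    rw [Function.iterate_succ_apply, D_ichoose_mul, iterate_D_add, Pi.add_apply, ih, ih,
      add_comm, pascal]
    congr 1 <;> refine Finset.sum_congr rfl fun i _ => ?_
    · congr 3; push_cast; ring
    · rw [Function.iterate_succ_apply]; congr 3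
      · ring
      · push_cast; ring

/-- `D^k(C(n,r)·g(λ)) = Σ_{i=0}^{k} C(k,i) C(n+i, r−k+i) D^i g(λ)` with `n = |λ|`,
for any integer `r` (binomial coefficients with negative lower index being `0`). -/
theorem Dk_binomial_mul (g : YoungDiagram → ℚ) (k : ℕ) (r : ℤ) (l : YoungDiagram) :
    D^[k] (fun t => ichoose t.card r * g t) l
      = ∑ i ∈ Finset.range (k + 1),
          (k.choose i : ℚ) * ichoose (l.card + i) (r - k + i) * D^[i] g l := by
  simpa using iterate_D_ichoose_mul k 0 r g l

end HookDiff
end
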